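/- arXiv:2412.10223 — 3 statements merged into one kernel-verified Lean document; each statement's English description precedes it below -/
import Mathlib

section
/- For every integer m ≥ 1 there exists a constant G ∈ ℕ (depending only on m) such that for every n ≥ 1, every subgroup S of V with |S| > G, and every permutation π of V, there exist J ∈ S and I ∈ V with Hamming weight |I| > m such that a^J_I ≠ 0. In other words, no permutation of V can make all the Fourier coefficients of all elements of a sufficiently large subgroup vanish above locality m. -/
open Finset

/-- Hamming weight of an n-bit vector. -/
def wt {n : ℕ} (v : Fin n → ZMod 2) : ℕ :=
  (Finset.univ.filter (fun i => v i = 1)).card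

/-- The sign (-1)^{u·v} ∈ ℝ. -/
noncomputable def sgn {n : ℕ} (u v : Fin n → ZMod 2) : ℝ :=
  if (∑ i, u i * v i) = (1 : ZMod 2) then -1 else 1

/-- Fourier coefficient a^J_I, for a permutation π of V = Fin n → ZMod 2. -/
noncomputable def fc {n : ℕ} (π : Equiv.Perm (Fin n → ZMod 2))
    (J I : Fin n → ZMod 2) : ℝ :=
  (1 / 2 ^ n) * ∑ x : Fin n → ZMod 2, sgn I x * sgn (π x) J

/-!
Put `F x = ∑_{J ∈ S} (-1)^{J·π(x)}`. It equals `|S|` on `π⁻¹(S^⊥)` and `0` elsewhere, so its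
support has exactly `2^n / |S|` points, and its Walsh coefficients are `∑_{J ∈ S} a^J_I`. If these
vanish for `|I| > m`, take a nonzero coefficient `I₀` of maximal weight and let `U` be the group
of vectors supported inside `supp I₀`, so `|U| ≤ 2^m`. Summing `F(x) (-1)^{I₀·x}` over a coset of
`U` kills every Walsh term except the one at `I₀` and leaves `|U| F̂(I₀) ≠ 0`, so every coset of
`U` meets the support of `F`. Hence the support has at least `2^n / 2^m` points, and `|S| ≤ 2^m`.
-/

open scoped Pointwise

lemma ZMod.ne_zero_iff_eq_one_mod_two {a : ZMod 2} : a ≠ 0 ↔ a = 1 := by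
  revert a; decide

lemma ZMod.pi_add_eq_zero_iff_mod_two {ι : Type*} {v w : ι → ZMod 2} : v + w = 0 ↔ v = w := by
  simp only [funext_iff, Pi.add_apply, Pi.zero_apply, CharTwo.add_eq_zero]

lemma eq_of_hammingNorm_le_of_eq_on_support {ι : Type*} [Fintype ι] {β : ι → Type*}
    [∀ i, DecidableEq (β i)] [∀ i, Zero (β i)] {x y : ∀ i, β i} (hxy : ∀ i, y i ≠ 0 → x i = y i)
    (hle : hammingNorm x ≤ hammingNorm y) : x = y := by
  have hsub : ({i | y i ≠ 0} : Finset ι) ⊆ ({i | x i ≠ 0} : Finset ι) := fun i => by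
    simp only [Finset.mem_filter, Finset.mem_univ, true_and]
    exact fun hi => hxy i hi ▸ hi
  have hsupp := Finset.eq_of_subset_of_card_le hsub hle
  funext i
  by_cases hi : y i = 0
  · have : i ∉ ({i | x i ≠ 0} : Finset ι) := hsupp ▸ by simp [hi]
    simpa [hi] using this
  · exact hxy i hi

lemma AddChar.sum_addSubgroup_eq_ite {A R : Type*} [AddGroup A] [CommSemiring R] [IsDomain R]
    (ψ : AddChar A R) (H : AddSubgroup A) [Fintype H] [Decidable (∀ h ∈ H, ψ h = 1)] :
    ∑ h : H, ψ h = if ∀ h ∈ H, ψ h = 1 then (Fintype.card H : R) else 0 := by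
  classical
  have := AddChar.sum_eq_ite (ψ.compAddMonoidHom H.subtype)
  simp only [AddChar.compAddMonoidHom_apply, AddSubgroup.coe_subtype] at this
  rw [this]
  congr 1
  simp [AddChar.ext_iff]

section SupportedOn

variable {ι : Type*}

def subgroupSupportedOn (I : ι → ZMod 2) : AddSubgroup (ι → ZMod 2) :=
  AddSubgroup.pi {i | I i = 0} fun _ => ⊥

lemma mem_subgroupSupportedOn {I u : ι → ZMod 2} :
    u ∈ subgroupSupportedOn I ↔ ∀ i, I i = 0 → u i = 0 := by
  simp [subgroupSupportedOn, AddSubgroup.mem_pi]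

lemma card_subgroupSupportedOn_le [Fintype ι] (I : ι → ZMod 2) :
    Nat.card (subgroupSupportedOn I) ≤ 2 ^ hammingNorm I := by
  classical
  have hinj : Function.Injective
      fun u : subgroupSupportedOn I => fun i : {i // I i ≠ 0} => (u : ι → ZMod 2) i := by
    intro u v huv
    ext i
    by_cases hi : I i = 0
    · rw [mem_subgroupSupportedOn.mp u.2 i hi, mem_subgroupSupportedOn.mp v.2 i hi]
    · exact congr_fun huv ⟨i, hi⟩
  rw [Nat.card_eq_fintype_card]
  simpa [Fintype.card_subtype, hammingNorm] using Fintype.card_le_of_injective _ hinj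

end SupportedOn

section Walsh

variable {ι : Type*} [Fintype ι]

noncomputable def walsh (u : ι → ZMod 2) : AddChar (ι → ZMod 2) ℝ :=
  (AddChar.zmodChar 2 (by norm_num : (-1 : ℝ) ^ 2 = 1)).compAddMonoidHom
    (AddMonoidHom.mk' (u ⬝ᵥ ·) (dotProduct_add u))

lemma walsh_apply (u v : ι → ZMod 2) : walsh u v = if u ⬝ᵥ v = 1 then -1 else 1 := by
  change (-1 : ℝ) ^ (u ⬝ᵥ v).val = _
  rcases (by decide : ∀ a : ZMod 2, a = 0 ∨ a = 1) (u ⬝ᵥ v) with h | h <;> simp [h, ZMod.val_one]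

lemma walsh_comm (u v : ι → ZMod 2) : walsh u v = walsh v u := by
  rw [walsh_apply, walsh_apply, dotProduct_comm]

lemma walsh_add_left (u u' v : ι → ZMod 2) : walsh (u + u') v = walsh u v * walsh u' v := by
  rw [walsh_comm, AddChar.map_add_eq_mul, walsh_comm v, walsh_comm v]

@[simp] lemma walsh_zero_left (v : ι → ZMod 2) : walsh 0 v = 1 := by
  rw [walsh_comm, AddChar.map_zero_eq_one]

variable [DecidableEq ι]

lemma walsh_single (u : ι → ZMod 2) (i : ι) :
    walsh u (Pi.single i 1) = if u i = 1 then -1 else 1 := by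
  rw [walsh_apply, dotProduct_single, mul_one]

lemma eq_zero_of_walsh_single_eq_one {u : ι → ZMod 2} {i : ι} (h : walsh u (Pi.single i 1) = 1) :
    u i = 0 := by
  by_contra hi
  rw [walsh_single, if_pos (ZMod.ne_zero_iff_eq_one_mod_two.mp hi)] at h
  norm_num at h

lemma walsh_eq_one_iff {u : ι → ZMod 2} : walsh u = 1 ↔ u = 0 :=
  ⟨fun h => funext fun i => eq_zero_of_walsh_single_eq_one (DFunLike.congr_fun h _),
    fun h => by ext v; simp [h]⟩

lemma sum_walsh_eq_ite (u : ι → ZMod 2) :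
    ∑ v, walsh u v = if u = 0 then (Fintype.card (ι → ZMod 2) : ℝ) else 0 := by
  rw [AddChar.sum_eq_ite]
  congr 1
  exact propext walsh_eq_one_iff

noncomputable def walshCoeff (f : (ι → ZMod 2) → ℝ) (I : ι → ZMod 2) : ℝ :=
  (Fintype.card (ι → ZMod 2) : ℝ)⁻¹ * ∑ x, f x * walsh I x

lemma sum_walshCoeff_mul_walsh (f : (ι → ZMod 2) → ℝ) (x : ι → ZMod 2) :
    ∑ I, walshCoeff f I * walsh I x = f x := by
  have horth : ∀ y, ∑ I, walsh I y * walsh I x =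
      if y = x then (Fintype.card (ι → ZMod 2) : ℝ) else 0 := fun y => by
    simp only [walsh_comm _ y, walsh_comm _ x, ← walsh_add_left, sum_walsh_eq_ite,
      ZMod.pi_add_eq_zero_iff_mod_two]
  calc ∑ I, walshCoeff f I * walsh I x
      = (Fintype.card (ι → ZMod 2) : ℝ)⁻¹ * ∑ y, f y * ∑ I, walsh I y * walsh I x := by
        simp only [walshCoeff, Finset.mul_sum, Finset.sum_mul, mul_assoc]
        exact Finset.sum_comm
    _ = f x := by
        simp only [horth, mul_ite, mul_zero, Finset.sum_ite_eq', Finset.mem_univ, if_true]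
        field_simp

lemma exists_add_mem_subgroupSupportedOn_ne_zero (f : (ι → ZMod 2) → ℝ) {I₀ : ι → ZMod 2}
    (h₀ : walshCoeff f I₀ ≠ 0)
    (hmax : ∀ I, walshCoeff f I ≠ 0 → hammingNorm I ≤ hammingNorm I₀) (w : ι → ZMod 2) :
    ∃ u ∈ subgroupSupportedOn I₀, f (w + u) ≠ 0 := by
  classical
  set U := subgroupSupportedOn I₀
  by_contra! hvanish
  have hother : ∀ I ≠ I₀,
      walshCoeff f I * walsh (I + I₀) w * ∑ u : U, walsh (I + I₀) u = 0 := by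
    intro I hI
    by_cases hc : walshCoeff f I = 0
    · simp [hc]
    rw [AddChar.sum_addSubgroup_eq_ite, if_neg, mul_zero]
    -- `walsh (I + I₀)` trivial on `U` means `I = I₀` on `supp I₀`; maximality then forces `I = I₀`
    refine fun htriv => hI (eq_of_hammingNorm_le_of_eq_on_support (fun i hi => ?_) (hmax I hc))
    have := eq_zero_of_walsh_single_eq_one <| htriv _ <|
      mem_subgroupSupportedOn.mpr fun j hj => Pi.single_eq_of_ne (by rintro rfl; exact hi hj) _
    exact CharTwo.add_eq_zero.mp this
  have hsum : ∑ u : U, f (w + u) * walsh I₀ (w + u) = walshCoeff f I₀ * Nat.card U := by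
    calc ∑ u : U, f (w + u) * walsh I₀ (w + u)
        = ∑ u : U, ∑ I, walshCoeff f I * walsh (I + I₀) w * walsh (I + I₀) u := by
          refine Finset.sum_congr rfl fun u _ => ?_
          rw [← sum_walshCoeff_mul_walsh f (w + u), Finset.sum_mul]
          refine Finset.sum_congr rfl fun I _ => ?_
          rw [mul_assoc, ← walsh_add_left, AddChar.map_add_eq_mul, mul_assoc]
      _ = ∑ I, walshCoeff f I * walsh (I + I₀) w * ∑ u : U, walsh (I + I₀) u := by
          rw [Finset.sum_comm]
          simp only [Finset.mul_sum]
      _ = walshCoeff f I₀ * Nat.card U := by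
          rw [Finset.sum_eq_single I₀ (fun I _ hI => hother I hI) (by simp)]
          simp [ZMod.pi_add_eq_zero_iff_mod_two.mpr rfl]
  have hU : (Nat.card U : ℝ) ≠ 0 := by exact_mod_cast Nat.card_pos.ne'
  simp only [hvanish _ (Subtype.mem _), zero_mul, Finset.sum_const_zero] at hsum
  exact mul_ne_zero h₀ hU hsum.symm

theorem card_le_two_pow_mul_card_support {f : (ι → ZMod 2) → ℝ} (hf : f ≠ 0) {d : ℕ}
    (hdeg : ∀ I, d < hammingNorm I → walshCoeff f I = 0) :
    Fintype.card (ι → ZMod 2) ≤ 2 ^ d * #{x | f x ≠ 0} := by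
  classical
  obtain ⟨I₀, h₀, hmax⟩ : ∃ I₀, walshCoeff f I₀ ≠ 0 ∧
      ∀ I, walshCoeff f I ≠ 0 → hammingNorm I ≤ hammingNorm I₀ := by
    have hne : ({I | walshCoeff f I ≠ 0} : Finset _).Nonempty := by
      by_contra! hzero
      refine hf (funext fun x => ?_)
      rw [← sum_walshCoeff_mul_walsh f x]
      exact Finset.sum_eq_zero fun I _ => by simp_all [Finset.filter_eq_empty_iff]
    obtain ⟨I₀, hI₀, hmax⟩ := Finset.exists_max_image _ hammingNorm hne
    exact ⟨I₀, (Finset.mem_filter.mp hI₀).2, fun I hI => hmax I (by simpa using hI)⟩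
  have hI₀ : hammingNorm I₀ ≤ d := not_lt.mp fun h => h₀ (hdeg I₀ h)
  set A : Finset (ι → ZMod 2) := {x | f x ≠ 0}
  set U := (subgroupSupportedOn I₀ : Set (ι → ZMod 2)).toFinset
  have hcover : Finset.univ ⊆ A + U := by
    intro w _
    obtain ⟨u, hu, hfu⟩ := exists_add_mem_subgroupSupportedOn_ne_zero f h₀ hmax w
    exact Finset.mem_add.mpr ⟨w + u, by simpa [A] using hfu, -u, by simpa [U] using hu, by simp⟩
  have hU : #U ≤ 2 ^ d := by
    rw [Set.toFinset_card, ← Nat.card_eq_fintype_card]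
    exact (card_subgroupSupportedOn_le I₀).trans (Nat.pow_le_pow_right two_pos hI₀)
  calc Fintype.card (ι → ZMod 2) ≤ #(A + U) := Finset.card_le_card hcover
    _ ≤ #A * #U := Finset.card_add_le
    _ ≤ 2 ^ d * #A := by rw [mul_comm]; gcongr

noncomputable def subgroupCharSum (S : AddSubgroup (ι → ZMod 2)) [Fintype S]
    (π : Equiv.Perm (ι → ZMod 2)) (x : ι → ZMod 2) : ℝ :=
  ∑ J : S, walsh (π x) J

variable (S : AddSubgroup (ι → ZMod 2)) [Fintype S] (π : Equiv.Perm (ι → ZMod 2))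

lemma subgroupCharSum_eq_zero_or_eq_card (x : ι → ZMod 2) :
    subgroupCharSum S π x = 0 ∨ subgroupCharSum S π x = Nat.card S := by
  classical
  rw [subgroupCharSum, AddChar.sum_addSubgroup_eq_ite]
  split_ifs <;> simp

lemma sum_subgroupCharSum : ∑ x, subgroupCharSum S π x = Fintype.card (ι → ZMod 2) := by
  calc ∑ x, subgroupCharSum S π x = ∑ x, ∑ J : S, walsh (J : ι → ZMod 2) (π x) :=
        Finset.sum_congr rfl fun x _ => Finset.sum_congr rfl fun J _ => walsh_comm _ _
    _ = ∑ J : S, ∑ y, walsh (J : ι → ZMod 2) y := by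
        rw [Finset.sum_comm]
        exact Finset.sum_congr rfl fun J _ => Equiv.sum_comp π _
    _ = Fintype.card (ι → ZMod 2) := by
        simp only [sum_walsh_eq_ite, ZeroMemClass.coe_eq_zero]
        simp

lemma card_support_subgroupCharSum_mul_card :
    #{x | subgroupCharSum S π x ≠ 0} * Nat.card S = Fintype.card (ι → ZMod 2) := by
  have h := sum_subgroupCharSum S π
  rw [← Finset.sum_filter_ne_zero, Finset.sum_congr rfl fun x hx =>
    (subgroupCharSum_eq_zero_or_eq_card S π x).resolve_left (Finset.mem_filter.mp hx).2] at h
  rw [Finset.sum_const, nsmul_eq_mul] at h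
  exact_mod_cast h

end Walsh

lemma sgn_eq_walsh {n : ℕ} (u v : Fin n → ZMod 2) : sgn u v = walsh u v := by
  rw [walsh_apply]; rfl

lemma wt_eq_hammingNorm {n : ℕ} (v : Fin n → ZMod 2) : wt v = hammingNorm v := by
  simp only [wt, hammingNorm, ZMod.ne_zero_iff_eq_one_mod_two]

lemma walshCoeff_subgroupCharSum {n : ℕ} (S : AddSubgroup (Fin n → ZMod 2)) [Fintype S]
    (π : Equiv.Perm (Fin n → ZMod 2)) (I : Fin n → ZMod 2) :
    walshCoeff (subgroupCharSum S π) I = ∑ J : S, fc π J I := by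
  simp only [walshCoeff, subgroupCharSum, fc, sgn_eq_walsh, Finset.sum_mul, Finset.mul_sum]
  rw [Finset.sum_comm]
  simp [mul_comm]

/-- For every m ≥ 1 there is a constant G (depending only on m) such that for every
n ≥ 1, every subgroup S of V with |S| > G, and every permutation π of V, some J ∈ S
has a nonzero Fourier coefficient a^J_I at some I of Hamming weight > m. -/
theorem no_localization_of_large_subgroup :
    ∀ m : ℕ, 1 ≤ m → ∃ G : ℕ,
      ∀ n : ℕ, 1 ≤ n →
        ∀ S : AddSubgroup (Fin n → ZMod 2), G < Nat.card S →
          ∀ π : Equiv.Perm (Fin n → ZMod 2),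
            ∃ J ∈ S, ∃ I : Fin n → ZMod 2, m < wt I ∧ fc π J I ≠ 0 := by
  intro m _
  refine ⟨2 ^ m, fun n _ S hS π => ?_⟩
  by_contra! hloc
  let _ : Fintype S := Fintype.ofFinite S
  have hdeg : ∀ I, m < hammingNorm I → walshCoeff (subgroupCharSum S π) I = 0 := fun I hI => by
    rw [walshCoeff_subgroupCharSum]
    exact Finset.sum_eq_zero fun J _ => hloc J J.2 I (wt_eq_hammingNorm I ▸ hI)
  have hcard := card_support_subgroupCharSum_mul_card S π
  have hF : subgroupCharSum S π ≠ 0 := fun h => by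
    simp [h] at hcard
    exact (pow_pos two_pos n).ne hcard
  have hsupp := card_le_two_pow_mul_card_support hF hdeg
  have hV : 0 < Fintype.card (Fin n → ZMod 2) := Fintype.card_pos
  nlinarith
end

section
/- For every integer m ≥ 1 and every real C > 0, there exist an integer n ≥ 1 and a subset S of V with |S| ≤ C·n such that for every permutation π of V there exist J ∈ S and I ∈ V with Hamming weight |I| > m and a^J_I ≠ 0. Consequently the 'Quasiparticle Locality Conjecture' (that sets of size O(n) always admit a permutation localizing all their Fourier coefficients to weight ≤ m) is false. -/
open Finset

/-!
Suppose a permutation `π` localised to weight `≤ m` the Fourier spectra of `x ↦ (-1)^{π(x)·J}`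
for all `J` in a coordinate subcube `S = 𝔽₂^A` with `#A = m + 1`. Then it would localise the
spectrum of their sum, `2^(m+1) · 1[π x vanishes on A]`, as well. A `0/1`-valued function of
Fourier degree `≤ m` has vanishing coordinate differences of order `m + 1` over `ℝ`, hence over
`𝔽₂`; so it has `𝔽₂`-degree `≤ m` and, if nonzero, at least `2^(n-m)` points in its support
(the minimum distance of the Reed–Muller code `RM(m, n)`). But `π x` vanishes on `A` for only
`2^(n-m-1)` points `x`. Taking `n ≥ 2^(m+1) / C` makes `#S ≤ C n`.
-/

theorem AddChar.map_sum_eq_prod {α A R : Type*} [AddCommMonoid A] [CommMonoid R]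
    (ψ : AddChar A R) (s : Finset α) (g : α → A) : ψ (∑ i ∈ s, g i) = ∏ i ∈ s, ψ (g i) :=
  map_prod ψ.toMonoidHom (fun i => Multiplicative.ofAdd (g i)) s

namespace BooleanCube

theorem zmod_two_eq_zero_or_eq_one (a : ZMod 2) : a = 0 ∨ a = 1 := by
  revert a; decide

section CubeDiff

variable {ι G M N : Type*} [AddCommGroup G] [AddCommGroup M] [AddCommGroup N]

/-- `(-1)^#D` times the iterated difference `Δ_[v i₁] ⋯ Δ_[v iₖ] f x`, where
`D = {i₁, …, iₖ}`. -/
def cubeDiff (v : ι → G) (f : G → M) (D : Finset ι) (x : G) : M :=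
  ∑ T ∈ D.powerset, (-1 : ℤ) ^ #T • f (x + ∑ i ∈ T, v i)

variable {v : ι → G} {f : G → M} {D : Finset ι} {i : ι}

theorem cubeDiff_insert [DecidableEq ι] (hi : i ∉ D) (x : G) :
    cubeDiff v f (insert i D) x = -cubeDiff v (fwdDiff (v i) f) D x := by
  rw [cubeDiff, sum_powerset_insert hi, cubeDiff, ← sum_neg_distrib, ← sum_add_distrib]
  refine sum_congr rfl fun T hT => ?_
  have hiT : i ∉ T := fun h => hi (mem_powerset.1 hT h)
  have hshift : x + ∑ j ∈ insert i T, v j = x + ∑ j ∈ T, v j + v i := by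
    rw [sum_insert hiT]; abel
  rw [card_insert_of_notMem hiT, hshift, fwdDiff, pow_succ, mul_neg_one, neg_smul, smul_sub]
  abel

theorem cubeDiff_singleton [DecidableEq ι] (x : G) :
    cubeDiff v f {i} x = -fwdDiff (v i) f x := by
  rw [← insert_empty, cubeDiff_insert (notMem_empty i)]
  simp [cubeDiff]

theorem cubeDiff_eq_zero_of_add_eq [DecidableEq ι] (hi : i ∈ D) (hf : ∀ y, f (y + v i) = f y)
    (x : G) : cubeDiff v f D x = 0 := by
  have hΔ : fwdDiff (v i) f = 0 := funext fun y => sub_eq_zero.2 (hf y)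
  rw [← insert_erase hi, cubeDiff_insert (notMem_erase i D), hΔ]
  simp [cubeDiff]

theorem map_cubeDiff (φ : M →+ N) (x : G) : φ (cubeDiff v f D x) = cubeDiff v (φ ∘ f) D x := by
  simp [cubeDiff]

theorem cubeDiff_sum {κ : Type*} (s : Finset κ) (g : κ → G → M) (x : G) :
    cubeDiff v (∑ j ∈ s, g j) D x = ∑ j ∈ s, cubeDiff v (g j) D x := by
  simp only [cubeDiff, Finset.sum_apply, smul_sum]
  exact sum_comm

end CubeDiff

section DegreeLE

variable {ι M N : Type*} [DecidableEq ι] [AddCommGroup M] [AddCommGroup N]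

/-- For real-valued `f` this says that the Fourier coefficients of `f` of weight `> m` vanish;
for `ZMod 2`-valued `f`, that the algebraic normal form of `f` has degree `≤ m`. -/
def DegreeLE (m : ℕ) (f : (ι → ZMod 2) → M) : Prop :=
  ∀ D : Finset ι, #D = m + 1 → ∀ x, cubeDiff (fun i => Pi.single i 1) f D x = 0

variable {m : ℕ} {f : (ι → ZMod 2) → M}

theorem degreeLE_zero : DegreeLE m (0 : (ι → ZMod 2) → M) :=
  fun D _ x => by simp [cubeDiff]

theorem DegreeLE.comp (hf : DegreeLE m f) (φ : M →+ N) : DegreeLE m (φ ∘ f) :=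
  fun D hD x => by rw [← map_cubeDiff, hf D hD x, map_zero]

theorem DegreeLE.of_comp {φ : M →+ N} (hφ : Function.Injective φ) (hf : DegreeLE m (φ ∘ f)) :
    DegreeLE m f := fun D hD x => hφ <| by rw [map_cubeDiff, hf D hD x, map_zero]

theorem DegreeLE.const_smul {R : Type*} [Monoid R] [DistribMulAction R M] (hf : DegreeLE m f)
    (c : R) : DegreeLE m (c • f) :=
  hf.comp (DistribSMul.toAddMonoidHom M c)

theorem DegreeLE.sum {κ : Type*} {s : Finset κ} {g : κ → (ι → ZMod 2) → M}
    (hg : ∀ j ∈ s, DegreeLE m (g j)) : DegreeLE m (∑ j ∈ s, g j) := fun D hD x => by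
  rw [cubeDiff_sum]
  exact sum_eq_zero fun j hj => hg j hj D hD x

theorem DegreeLE.fwdDiff_eq_zero (hf : DegreeLE 0 f) (i : ι) : fwdDiff (Pi.single i 1) f = 0 :=
  funext fun x => neg_eq_zero.1 <| by
    rw [← cubeDiff_singleton (v := fun i => Pi.single i 1)]
    exact hf {i} (card_singleton i) x

theorem DegreeLE.fwdDiff [Module (ZMod 2) M] (hf : DegreeLE (m + 1) f) (i : ι) :
    DegreeLE m (fwdDiff (Pi.single i 1) f) := fun D hD x => by
  by_cases hi : i ∈ D
  · -- over `ZMod 2`, `Δ_[eᵢ] f` is itself invariant under translation by `eᵢ`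
    refine cubeDiff_eq_zero_of_add_eq hi (fun y => ?_) x
    simp only [_root_.fwdDiff, add_assoc, ZModModule.add_self, add_zero, ← neg_sub (f y),
      ZModModule.neg_eq_self]
  · rw [← neg_eq_zero, ← cubeDiff_insert hi]
    exact hf _ (by rw [card_insert_of_notMem hi, hD]) x

theorem eq_of_fwdDiff_single_eq_zero [Fintype ι] (hf : ∀ i : ι, fwdDiff (Pi.single i 1) f = 0)
    (x : ι → ZMod 2) : f x = f 0 := by
  have hshift : ∀ y i (b : ZMod 2), f (Pi.single i b + y) = f y := by
    intro y i b
    have h := sub_eq_zero.1 (congrFun (hf i) y)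
    rcases zmod_two_eq_zero_or_eq_one b with rfl | rfl
    · simp
    · rwa [add_comm]
  rw [← univ_sum_single x]
  induction (univ : Finset ι) using Finset.induction_on with
  | empty => simp
  | insert j s hj ih => rw [sum_insert hj, hshift, ih]

theorem card_support_eq_of_fwdDiff_single_eq_zero [Fintype ι] {f : (ι → ZMod 2) → ZMod 2}
    (hf : ∀ i : ι, fwdDiff (Pi.single i 1) f = 0) (hne : f ≠ 0) :
    #{x | f x ≠ 0} = 2 ^ Fintype.card ι := by
  have hconst := eq_of_fwdDiff_single_eq_zero hf
  have h0 : f 0 ≠ 0 := fun h0 => hne (funext fun x => (hconst x).trans h0)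
  rw [filter_true_of_mem fun x _ => by rwa [hconst x], card_univ, Fintype.card_fun, ZMod.card]

end DegreeLE

theorem card_support_fwdDiff_le {G M : Type*} [AddCommGroup G] [Fintype G] [DecidableEq G]
    [AddCommGroup M] [DecidableEq M] (w : G) (f : G → M) :
    #{x | fwdDiff w f x ≠ 0} ≤ 2 * #{x | f x ≠ 0} :=
  calc #{x | fwdDiff w f x ≠ 0}
      ≤ #(univ.filter (fun x => f (x + w) ≠ 0) ∪ univ.filter (fun x => f x ≠ 0)) := by
        refine card_le_card fun x hx => ?_
        rw [mem_filter] at hx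
        rw [mem_union, mem_filter, mem_filter]
        by_contra! h
        exact hx.2 (by simp [fwdDiff, h.1 hx.1, h.2 hx.1])
    _ ≤ #{x | f (x + w) ≠ 0} + #{x | f x ≠ 0} := card_union_le _ _
    _ = 2 * #{x | f x ≠ 0} := by
      rw [card_equiv (t := {x | f x ≠ 0}) (Equiv.addRight w) (by simp), two_mul]

/-- The minimum distance of the Reed–Muller code `RM(m, n)`: unless `f` is constant, some
`Δ_[eᵢ] f` is nonzero of degree `≤ m - 1`, and its support is at most twice that of `f`. -/
theorem two_pow_card_le_card_support {ι : Type*} [Fintype ι] [DecidableEq ι] {m : ℕ}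
    {f : (ι → ZMod 2) → ZMod 2} (hf : DegreeLE m f) (hne : f ≠ 0) :
    2 ^ Fintype.card ι ≤ 2 ^ m * #{x | f x ≠ 0} := by
  induction m generalizing f with
  | zero =>
    rw [card_support_eq_of_fwdDiff_single_eq_zero hf.fwdDiff_eq_zero hne]
    exact Nat.le_mul_of_pos_left _ (by positivity)
  | succ k ih =>
    by_cases hconst : ∀ i, fwdDiff (Pi.single i 1) f = 0
    · rw [card_support_eq_of_fwdDiff_single_eq_zero hconst hne]
      exact Nat.le_mul_of_pos_left _ (by positivity)
    obtain ⟨i, hi⟩ := not_forall.1 hconst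
    calc 2 ^ Fintype.card ι ≤ 2 ^ k * #{x | fwdDiff (Pi.single i 1) f x ≠ 0} :=
          ih (hf.fwdDiff i) hi
      _ ≤ 2 ^ k * (2 * #{x | f x ≠ 0}) := Nat.mul_le_mul_left _ (card_support_fwdDiff_le _ _)
      _ = 2 ^ (k + 1) * #{x | f x ≠ 0} := by ring

section Subcube

variable {ι : Type*} [Fintype ι] [DecidableEq ι]

def subcube (A : Finset ι) : Finset (ι → ZMod 2) :=
  Fintype.piFinset fun i => if i ∈ A then univ else {0}

theorem mem_subcube {A : Finset ι} {x : ι → ZMod 2} : x ∈ subcube A ↔ ∀ i ∉ A, x i = 0 := by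
  simp only [subcube, Fintype.mem_piFinset]
  refine forall_congr' fun i => ?_
  split_ifs with h <;> simp [h]

theorem card_subcube (A : Finset ι) : #(subcube A) = 2 ^ #A := by
  simp [subcube, Fintype.card_piFinset, apply_ite card, prod_ite_mem]

end Subcube

def signChar : AddChar (ZMod 2) ℝ where
  toFun a := if a = 1 then -1 else 1
  map_zero_eq_one' := by simp
  map_add_eq_mul' a b := by
    rcases zmod_two_eq_zero_or_eq_one a with rfl | rfl <;>
      rcases zmod_two_eq_zero_or_eq_one b with rfl | rfl <;> norm_num
    decide

theorem sum_signChar_mul (c : ZMod 2) : ∑ b, signChar (c * b) = if c = 0 then 2 else 0 := by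
  rcases zmod_two_eq_zero_or_eq_one c with rfl | rfl
  · simp
  · simp only [one_mul, one_ne_zero, if_false]
    refine AddChar.sum_eq_zero_iff_ne_zero.2 fun h => ?_
    have := DFunLike.congr_fun h 1
    norm_num [signChar] at this

section Characters

variable {n : ℕ}

theorem sgn_eq_prod (u v : Fin n → ZMod 2) : sgn u v = ∏ i, signChar (u i * v i) :=
  AddChar.map_sum_eq_prod signChar univ _

theorem sgn_comm (u v : Fin n → ZMod 2) : sgn u v = sgn v u := by
  simp only [sgn_eq_prod, mul_comm (u _)]

theorem sgn_add (u x y : Fin n → ZMod 2) : sgn u (x + y) = sgn u x * sgn u y := by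
  simp only [sgn_eq_prod, Pi.add_apply, mul_add, AddChar.map_add_eq_mul, prod_mul_distrib]

theorem sgn_add_single_of_eq_zero {u : Fin n → ZMod 2} {i : Fin n} (hi : u i = 0)
    (x : Fin n → ZMod 2) : sgn u (x + Pi.single i 1) = sgn u x := by
  rw [sgn_add, sgn_eq_prod (v := Pi.single i 1), prod_eq_one fun j _ => ?_, mul_one]
  by_cases hj : j = i
  · simp [hj, hi]
  · simp [hj]

theorem sum_subcube_sgn (A : Finset (Fin n)) (y : Fin n → ZMod 2) :
    ∑ J ∈ subcube A, sgn y J = if ∀ i ∈ A, y i = 0 then 2 ^ #A else 0 := by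
  simp only [subcube, sgn_eq_prod]
  rw [← prod_univ_sum (fun i => if i ∈ A then univ else {0}) fun i b => signChar (y i * b)]
  have hfactor : ∀ i, ∑ b ∈ (if i ∈ A then univ else {0}), signChar (y i * b)
      = if i ∈ A then (if y i = 0 then 2 else 0) else 1 := fun i => by
    split_ifs <;> simp_all [sum_signChar_mul]
  simp only [hfactor, prod_ite_mem, univ_inter, prod_ite_zero, prod_const]

theorem sum_sgn (y : Fin n → ZMod 2) : ∑ J, sgn y J = if y = 0 then 2 ^ n else 0 := by
  have huniv : subcube (univ : Finset (Fin n)) = univ :=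
    eq_univ_of_forall fun x => mem_subcube.2 fun i hi => absurd (mem_univ i) hi
  simpa [huniv, funext_iff] using sum_subcube_sgn univ y

theorem sum_sgn_mul_sgn (x y : Fin n → ZMod 2) :
    ∑ I, sgn I x * sgn I y = if x = y then 2 ^ n else 0 := by
  simp only [← sgn_add, sgn_comm _ (x + y), sum_sgn, add_eq_zero_iff_eq_neg,
    ZModModule.neg_eq_self]

theorem sum_fc_mul_sgn (π : Equiv.Perm (Fin n → ZMod 2)) (J y : Fin n → ZMod 2) :
    ∑ I, fc π J I * sgn I y = sgn (π y) J :=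
  calc ∑ I, fc π J I * sgn I y
      = 1 / 2 ^ n * ∑ x, sgn (π x) J * ∑ I, sgn I x * sgn I y := by
        simp only [fc, mul_sum, sum_mul]
        rw [sum_comm]
        refine sum_congr rfl fun x _ => sum_congr rfl fun I _ => by ring
    _ = sgn (π y) J := by
      simp only [one_div, sum_sgn_mul_sgn, mul_ite, mul_zero, sum_ite_eq', mem_univ, ↓reduceIte]
      field_simp

end Characters

section Degree

variable {n m : ℕ}

theorem degreeLE_sgn {I : Fin n → ZMod 2} (hI : wt I ≤ m) : DegreeLE m (sgn I) := by
  intro D hD x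
  obtain ⟨i, hiD, hIi⟩ : ∃ i ∈ D, I i = 0 := by
    by_contra! h
    have hsub : D ⊆ univ.filter fun i => I i = 1 := fun i hi =>
      mem_filter.2 ⟨mem_univ i, (zmod_two_eq_zero_or_eq_one (I i)).resolve_left (h i hi)⟩
    have := card_le_card hsub
    rw [wt] at hI
    omega
  exact cubeDiff_eq_zero_of_add_eq hiD (sgn_add_single_of_eq_zero hIi) x

theorem degreeLE_sgn_perm {π : Equiv.Perm (Fin n → ZMod 2)} {J : Fin n → ZMod 2}
    (hloc : ∀ I, m < wt I → fc π J I = 0) : DegreeLE m fun x => sgn (π x) J := by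
  have hinv : (fun x => sgn (π x) J) = ∑ I, fc π J I • sgn I :=
    funext fun x => by simp [Finset.sum_apply, sum_fc_mul_sgn]
  rw [hinv]
  refine DegreeLE.sum fun I _ => ?_
  by_cases hI : m < wt I
  · rw [hloc I hI, zero_smul]
    exact degreeLE_zero
  · exact (degreeLE_sgn (not_lt.1 hI)).const_smul _

theorem exists_fc_ne_zero {A : Finset (Fin n)} (hA : m < #A)
    (π : Equiv.Perm (Fin n → ZMod 2)) :
    ∃ J ∈ subcube A, ∃ I, m < wt I ∧ fc π J I ≠ 0 := by
  by_contra! hloc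
  let indicator : (Fin n → ZMod 2) → ℤ := fun x => if ∀ i ∈ A, π x i = 0 then 1 else 0
  have hdegR : DegreeLE m (∑ J ∈ subcube A, fun x => sgn (π x) J) :=
    DegreeLE.sum fun J hJ => degreeLE_sgn_perm (hloc J hJ)
  have hdegZ : DegreeLE m indicator := by
    refine DegreeLE.of_comp (φ := Int.castAddHom ℝ) Int.cast_injective ?_
    convert hdegR.const_smul ((2 : ℝ) ^ #A)⁻¹ using 1
    funext x
    simp only [Function.comp_apply, Pi.smul_apply, Finset.sum_apply, smul_eq_mul, sum_subcube_sgn,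
      indicator]
    split_ifs <;> simp
  have hne : Int.castAddHom (ZMod 2) ∘ indicator ≠ 0 := fun h => by
    simpa [indicator] using congrFun h (π.symm 0)
  have hRM := two_pow_card_le_card_support (hdegZ.comp (Int.castAddHom (ZMod 2))) hne
  have hcount : #{x | (Int.castAddHom (ZMod 2) ∘ indicator) x ≠ 0} = 2 ^ #Aᶜ := by
    rw [← card_subcube]
    refine card_equiv π fun x => ?_
    simp [indicator, mem_subcube]
  rw [hcount, ← card_add_card_compl A, ← pow_add, Nat.pow_le_pow_iff_right (by norm_num)] at hRM
  omega

end Degree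

end BooleanCube

open BooleanCube in
/-- For every m ≥ 1 and every C > 0 there exist n ≥ 1 and a subset S of V with
|S| ≤ C·n such that no permutation of V localizes all Fourier coefficients of all
elements of S to Hamming weight ≤ m: the Quasiparticle Locality Conjecture is false. -/
theorem quasiparticle_locality_conjecture_false :
    ∀ m : ℕ, 1 ≤ m → ∀ C : ℝ, 0 < C →
      ∃ n : ℕ, 1 ≤ n ∧ ∃ S : Finset (Fin n → ZMod 2),
        (S.card : ℝ) ≤ C * n ∧
        ∀ π : Equiv.Perm (Fin n → ZMod 2),
          ∃ J ∈ S, ∃ I : Fin n → ZMod 2, m < wt I ∧ fc π J I ≠ 0 := by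
  intro m _ C hC
  obtain ⟨n, hn⟩ := exists_nat_ge ((2 : ℝ) ^ (m + 1) / C)
  let N := max n (m + 1)
  obtain ⟨A, -, hA⟩ := exists_subset_card_eq (s := (univ : Finset (Fin N))) (n := m + 1)
    (by simp [N])
  refine ⟨N, by omega, subcube A, ?_, fun π => exists_fc_ne_zero (by omega) π⟩
  rw [card_subcube, hA]
  push_cast
  calc (2 : ℝ) ^ (m + 1) ≤ C * n := by rwa [div_le_iff₀ hC, mul_comm] at hn
    _ ≤ C * N := by gcongr; exact_mod_cast le_max_left n (m + 1)
end

section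
/- Fix a permutation π of V. For all J₁, J₂ ∈ V, the group algebra elements satisfy F̄_{J₁ + J₂} = F̄_{J₁} * F̄_{J₂} (product in AddMonoidAlgebra ℝ V, i.e., convolution over XOR), and moreover F̄_0 = 1 (the multiplicative identity of the group algebra). Thus J ↦ F̄_J is a monoid homomorphism from (V, XOR) into the multiplicative monoid of AddMonoidAlgebra ℝ V. -/
open Finset

/-- The group algebra element F̄_J ∈ AddMonoidAlgebra ℝ V whose coefficient at g is a^J_g. -/
noncomputable def Fbar {n : ℕ} (π : Equiv.Perm (Fin n → ZMod 2))
    (J : Fin n → ZMod 2) : AddMonoidAlgebra ℝ (Fin n → ZMod 2) :=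
  ∑ g : Fin n → ZMod 2, AddMonoidAlgebra.single g (fc π J g)

/-!
For `v ∈ V` put `e_v := 2⁻ⁿ ∑_g (-1)^{g·v} g ∈ ℝ[V]` (so `charElem v = 2ⁿ e_v`). Translation
by `g` multiplies `e_v` by `(-1)^{g·v}`, so orthogonality of characters gives `e_u e_v = δ_{uv} e_v`
and `∑_v e_v = 1`: the `e_v` are a complete system of orthogonal idempotents. Exchanging sums,
`F̄_J = ∑_x (-1)^{π(x)·J} e_x`, so `J ↦ F̄_J` factors through the pointwise-multiplicative map
`J ↦ (x ↦ (-1)^{π(x)·J})` followed by the algebra map `f ↦ ∑_x f(x) e_x`.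
-/

open AddMonoidAlgebra

section Sign

variable {n : ℕ}

lemma zmod_two_eq_zero_or_one (a : ZMod 2) : a = 0 ∨ a = 1 := by
  revert a; decide

lemma sgn_eq_ite_dotProduct (u v : Fin n → ZMod 2) :
    sgn u v = if u ⬝ᵥ v = 1 then -1 else 1 := rfl

lemma sgn_comm (u v : Fin n → ZMod 2) : sgn u v = sgn v u := by
  rw [sgn_eq_ite_dotProduct, dotProduct_comm, ← sgn_eq_ite_dotProduct]

lemma sgn_zero_right (u : Fin n → ZMod 2) : sgn u 0 = 1 := by
  simp [sgn_eq_ite_dotProduct]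

lemma sgn_add_right (u v w : Fin n → ZMod 2) : sgn u (v + w) = sgn u v * sgn u w := by
  simp only [sgn_eq_ite_dotProduct, dotProduct_add]
  rcases zmod_two_eq_zero_or_one (u ⬝ᵥ v) with ha | ha <;>
    rcases zmod_two_eq_zero_or_one (u ⬝ᵥ w) with hb | hb <;> simp +decide [ha, hb]

lemma sgn_add_left (u v w : Fin n → ZMod 2) : sgn (u + v) w = sgn u w * sgn v w := by
  rw [sgn_comm, sgn_add_right, sgn_comm w, sgn_comm w]

noncomputable def sgnChar (v : Fin n → ZMod 2) : AddChar (Fin n → ZMod 2) ℝ where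
  toFun u := sgn u v
  map_zero_eq_one' := by rw [sgn_comm, sgn_zero_right]
  map_add_eq_mul' u w := sgn_add_left u w v

lemma sgnChar_ne_one {v : Fin n → ZMod 2} (hv : v ≠ 0) : sgnChar v ≠ 1 := by
  obtain ⟨i, hi⟩ := Function.ne_iff.mp hv
  have hvi : v i = 1 := (zmod_two_eq_zero_or_one _).resolve_left hi
  intro h
  have := DFunLike.congr_fun h (Pi.single i 1)
  norm_num [sgnChar, sgn_eq_ite_dotProduct, single_dotProduct, hvi] at this

lemma sum_sgn_left (v : Fin n → ZMod 2) :
    ∑ u, sgn u v = if v = 0 then (2 ^ n : ℝ) else 0 := by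
  split_ifs with hv
  · simp [hv, sgn_zero_right]
  · exact AddChar.sum_eq_zero_of_ne_one (sgnChar_ne_one hv)

lemma sum_sgn_right (u : Fin n → ZMod 2) :
    ∑ v, sgn u v = if u = 0 then (2 ^ n : ℝ) else 0 := by
  simp only [sgn_comm u, sum_sgn_left]

lemma sgn_mul_self (u v : Fin n → ZMod 2) : sgn u v * sgn u v = 1 := by
  unfold sgn; split_ifs <;> norm_num

end Sign

lemma AddMonoidAlgebra.single_finsetSum {R M ι : Type*} [Semiring R] (m : M) (s : Finset ι)
    (f : ι → R) : single m (∑ i ∈ s, f i) = ∑ i ∈ s, single m (f i) :=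
  map_sum (singleAddHom m) f s

section CharElem

variable {n : ℕ}

noncomputable def charElem (v : Fin n → ZMod 2) : AddMonoidAlgebra ℝ (Fin n → ZMod 2) :=
  ∑ g, single g (sgn g v)

lemma single_mul_charElem (g : Fin n → ZMod 2) (c : ℝ) (v : Fin n → ZMod 2) :
    single g c * charElem v = (c * sgn g v) • charElem v := by
  simp only [charElem, Finset.mul_sum, Finset.smul_sum, single_mul_single, smul_single']
  refine Fintype.sum_equiv (Equiv.addLeft g) _ _ fun h => ?_
  rw [Equiv.coe_addLeft, sgn_add_left, mul_assoc c, ← mul_assoc (sgn g v), sgn_mul_self, one_mul]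

lemma charElem_mul_charElem (u v : Fin n → ZMod 2) :
    charElem u * charElem v = if u = v then (2 ^ n : ℝ) • charElem v else 0 := by
  have hsum : ∑ g, sgn g u * sgn g v = if u = v then (2 ^ n : ℝ) else 0 := by
    simp only [← sgn_add_right, sum_sgn_left, ← ZModModule.sub_eq_add, sub_eq_zero]
  rw [charElem, Finset.sum_mul]
  simp only [single_mul_charElem, ← Finset.sum_smul, hsum, ite_smul, zero_smul]

lemma sum_charElem : ∑ v : Fin n → ZMod 2, charElem v = (2 ^ n : ℝ) • 1 := by
  simp only [charElem]
  rw [Finset.sum_comm]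
  simp only [← single_finsetSum, sum_sgn_right]
  rw [Fintype.sum_eq_single 0 fun g hg => by rw [if_neg hg, single_zero], if_pos rfl,
    one_def, smul_single', mul_one]

lemma sum_smul_charElem_mul (a b : (Fin n → ZMod 2) → ℝ) :
    (∑ x, a x • charElem x) * (∑ x, b x • charElem x) =
      (2 ^ n : ℝ) • ∑ x, (a x * b x) • charElem x := by
  simp only [Finset.sum_mul_sum, smul_mul_smul_comm, charElem_mul_charElem, smul_ite, smul_zero,
    Finset.sum_ite_eq, Finset.mem_univ, if_true, Finset.smul_sum, smul_smul]
  simp only [mul_comm _ ((2 : ℝ) ^ n)]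

lemma Fbar_eq_sum_smul_charElem (π : Equiv.Perm (Fin n → ZMod 2)) (J : Fin n → ZMod 2) :
    Fbar π J = (2 ^ n : ℝ)⁻¹ • ∑ x, sgn (π x) J • charElem x := by
  simp only [Fbar, fc, charElem, Finset.smul_sum, smul_single', Finset.mul_sum, single_finsetSum]
  rw [Finset.sum_comm]
  refine Finset.sum_congr rfl fun x _ => Finset.sum_congr rfl fun g _ => ?_
  rw [sgn_comm g x]
  congr 1
  ring

end CharElem

theorem Fbar_hom_general {n : ℕ} (π : Equiv.Perm (Fin n → ZMod 2)) :
    (∀ J₁ J₂ : Fin n → ZMod 2, Fbar π (J₁ + J₂) = Fbar π J₁ * Fbar π J₂) ∧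
    Fbar π (0 : Fin n → ZMod 2) = 1 := by
  have h2n : (2 ^ n : ℝ) ≠ 0 := by positivity
  refine ⟨fun J₁ J₂ => ?_, ?_⟩
  · rw [Fbar_eq_sum_smul_charElem, Fbar_eq_sum_smul_charElem, Fbar_eq_sum_smul_charElem,
      smul_mul_smul_comm, sum_smul_charElem_mul, smul_smul]
    simp only [sgn_add_right]
    field_simp
  · rw [Fbar_eq_sum_smul_charElem]
    simp only [sgn_zero_right, one_smul, sum_charElem, smul_smul, inv_mul_cancel₀ h2n]

/-- J ↦ F̄_J is a monoid homomorphism: it sends XOR addition to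
convolution products in the group algebra and 0 to 1. -/
theorem Fbar_hom {n : ℕ} (hn : 1 ≤ n) (π : Equiv.Perm (Fin n → ZMod 2)) :
    (∀ J₁ J₂ : Fin n → ZMod 2, Fbar π (J₁ + J₂) = Fbar π J₁ * Fbar π J₂) ∧
    Fbar π (0 : Fin n → ZMod 2) = 1 :=
  Fbar_hom_general π
end
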